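/- arXiv:2306.09865 — 2 statements merged into one kernel-verified Lean document; each statement's English description precedes it below -/
import Mathlib

section
/- Fix positive integers r ≤ n. Define 𝒟ⁿ_r as the set of symmetric n×n matrices with entries in {0,1} that are PSD with rank at most r, and 𝒫ⁿ_r := conv(𝒟ⁿ_r). Define 𝒮𝒞𝒫^{n+1} as the convex hull (in the space of symmetric (n+1)×(n+1) matrices) of { yyᵀ : y ∈ ℝ^{n+1}, y ≥ 0, y₁ ≥ y_i for all i = 2,…,n+1 }, and define 𝒞ⁿ_r := { X symmetric n×n : diag(X) ≤ 1_n and the block matrix with top-left entry r, top-right block diag(X)ᵀ, bottom-left block diag(X) and bottom-right block X lies in 𝒮𝒞𝒫^{n+1} }. Define ℛⁿ_r := { X symmetric n×n : there exist nonnegative reals θ_S for all subsets S ⊆ {1,…,n} with X = Σ_S θ_S 1_S 1_Sᵀ, Σ_S θ_S = r, and Σ_{S : i ∈ S} θ_S ≤ 1 for every i }. Then 𝒫ⁿ_r ⊆ 𝒞ⁿ_r = ℛⁿ_r, and for r = 1 all three sets are equal. -/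
open Matrix

/-- `𝒟ⁿ_r`: symmetric `{0,1}` matrices of order `n` that are PSD with rank at most `r`. -/
def Dset (n r : ℕ) : Set (Matrix (Fin n) (Fin n) ℝ) :=
  {X | X.IsSymm ∧ (∀ i j, X i j = 0 ∨ X i j = 1) ∧ X.PosSemidef ∧ X.rank ≤ r}

/-- `𝒫ⁿ_r := conv(𝒟ⁿ_r)`. -/
def Pset (n r : ℕ) : Set (Matrix (Fin n) (Fin n) ℝ) := convexHull ℝ (Dset n r)

/-- `𝒮𝒞𝒫^{n+1}`: the convex hull of `{ y yᵀ : y ≥ 0, y₁ ≥ y_i for i = 2,…,n+1 }`,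
where the index `Sum.inl 0` plays the role of the first coordinate. -/
def SCPset (n : ℕ) : Set (Matrix (Fin 1 ⊕ Fin n) (Fin 1 ⊕ Fin n) ℝ) :=
  convexHull ℝ {M | ∃ y : Fin 1 ⊕ Fin n → ℝ, (∀ i, 0 ≤ y i) ∧
    (∀ i : Fin n, y (Sum.inr i) ≤ y (Sum.inl 0)) ∧ M = Matrix.vecMulVec y y}

/-- `𝒞ⁿ_r`: symmetric matrices `X` with `diag X ≤ 1` whose lifted block matrix
`[[r, diag(X)ᵀ], [diag(X), X]]` belongs to `𝒮𝒞𝒫^{n+1}`. -/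
def Cset (n r : ℕ) : Set (Matrix (Fin n) (Fin n) ℝ) :=
  {X | X.IsSymm ∧ (∀ i, X.diag i ≤ 1) ∧
    Matrix.fromBlocks (Matrix.of fun (_ : Fin 1) (_ : Fin 1) => (r : ℝ))
      (Matrix.of fun (_ : Fin 1) j => X.diag j)
      (Matrix.of fun i (_ : Fin 1) => X.diag i) X ∈ SCPset n}

/-- The indicator vector `1_S ∈ {0,1}ⁿ` of a subset `S ⊆ {1,…,n}`. -/
def indVec {n : ℕ} (S : Finset (Fin n)) : Fin n → ℝ := fun i => if i ∈ S then 1 else 0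

/-- `ℛⁿ_r`: symmetric matrices of the form `Σ_S θ_S 1_S 1_Sᵀ` with `θ ≥ 0`,
`Σ_S θ_S = r` and `Σ_{S ∋ i} θ_S ≤ 1` for every `i`. -/
def Rset (n r : ℕ) : Set (Matrix (Fin n) (Fin n) ℝ) :=
  {X | X.IsSymm ∧ ∃ θ : Finset (Fin n) → ℝ, (∀ S, 0 ≤ θ S) ∧
    X = ∑ S : Finset (Fin n), θ S • Matrix.vecMulVec (indVec S) (indVec S) ∧
    (∑ S : Finset (Fin n), θ S) = (r : ℝ) ∧
    ∀ i : Fin n, (∑ S ∈ Finset.univ.filter (fun S : Finset (Fin n) => i ∈ S), θ S) ≤ 1}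

section Aux
open Matrix Finset
variable {n : ℕ}

lemma indVec_sq (S : Finset (Fin n)) (i : Fin n) : indVec S i * indVec S i = indVec S i := by
  simp only [indVec]; split <;> simp

lemma atom_apply (S : Finset (Fin n)) (i j : Fin n) :
    Matrix.vecMulVec (indVec S) (indVec S) i j = indVec S i * indVec S j := rfl

lemma rep_apply (θ : Finset (Fin n) → ℝ) (i j : Fin n) :
    (∑ S : Finset (Fin n), θ S • Matrix.vecMulVec (indVec S) (indVec S)) i j
      = ∑ S : Finset (Fin n), θ S * (indVec S i * indVec S j) := by
  simp [Matrix.sum_apply, Matrix.vecMulVec_apply]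

lemma rep_diag (θ : Finset (Fin n) → ℝ) (i : Fin n) :
    (∑ S : Finset (Fin n), θ S • Matrix.vecMulVec (indVec S) (indVec S)) i i
      = ∑ S ∈ Finset.univ.filter (fun S : Finset (Fin n) => i ∈ S), θ S := by
  rw [rep_apply, Finset.sum_filter]
  refine Finset.sum_congr rfl fun S _ => ?_
  by_cases h : i ∈ S <;> simp [indVec, h]

lemma atom_isSymm (S : Finset (Fin n)) :
    (Matrix.vecMulVec (indVec S) (indVec S)).IsSymm := by
  ext i j; simp [Matrix.vecMulVec_apply, mul_comm]

lemma atom_posSemidef (v : Fin n → ℝ) : (Matrix.vecMulVec v v).PosSemidef := by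
  rw [Matrix.posSemidef_iff_dotProduct_mulVec]
  constructor
  · ext i j; simp [Matrix.vecMulVec_apply, mul_comm]
  · intro x
    have : dotProduct (star x) ((Matrix.vecMulVec v v) *ᵥ x) = (∑ i, v i * x i) ^ 2 := by
      simp only [star_trivial, dotProduct, Matrix.mulVec, Matrix.vecMulVec_apply, sq,
        Finset.mul_sum, Finset.sum_mul]
      rw [Finset.sum_comm]
      exact Finset.sum_congr rfl fun i _ => Finset.sum_congr rfl fun j _ => by ring
    rw [this]; positivity


lemma sum_theta_ind (θ : Finset (Fin n) → ℝ) (i : Fin n) :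
    ∑ S : Finset (Fin n), θ S * indVec S i
      = ∑ S ∈ Finset.univ.filter (fun S : Finset (Fin n) => i ∈ S), θ S := by
  rw [Finset.sum_filter]
  refine Finset.sum_congr rfl fun S _ => ?_
  by_cases h : i ∈ S <;> simp [indVec, h]

lemma Rset_subset_Cset {r : ℕ} (hr : 0 < r) : Rset n r ⊆ Cset n r := by
  rintro X ⟨hsym, θ, hθ0, hrep, hsum, hcol⟩
  have hrR : (0 : ℝ) < r := by exact_mod_cast hr
  have hdiag : ∀ i, X.diag i ≤ 1 := by
    intro i
    have : X.diag i = ∑ S ∈ Finset.univ.filter (fun S : Finset (Fin n) => i ∈ S), θ S := by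
      rw [Matrix.diag_apply, hrep, rep_diag]
    rw [this]; exact hcol i
  refine ⟨hsym, hdiag, ?_⟩
  set e : Finset (Fin n) → (Fin 1 ⊕ Fin n) → ℝ :=
    fun S => Sum.elim (fun _ => 1) (indVec S) with he
  set u : Finset (Fin n) → (Fin 1 ⊕ Fin n) → ℝ :=
    fun S p => Real.sqrt r * e S p with hu
  have hrr : Real.sqrt r * Real.sqrt r = r := Real.mul_self_sqrt (le_of_lt hrR)
  have hatom : ∀ S p q, Matrix.vecMulVec (u S) (u S) p q = r * (e S p * e S q) := by
    intro S p q
    simp only [Matrix.vecMulVec_apply, hu]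
    calc Real.sqrt r * e S p * (Real.sqrt r * e S q)
        = (Real.sqrt r * Real.sqrt r) * (e S p * e S q) := by ring
      _ = r * (e S p * e S q) := by rw [hrr]
  have key : Matrix.fromBlocks (Matrix.of fun (_ : Fin 1) (_ : Fin 1) => (r : ℝ))
      (Matrix.of fun (_ : Fin 1) j => X.diag j)
      (Matrix.of fun i (_ : Fin 1) => X.diag i) X
      = ∑ S : Finset (Fin n), (θ S / r) • Matrix.vecMulVec (u S) (u S) := by
    ext p q
    rw [Matrix.sum_apply]
    have hterm : ∀ S, ((θ S / r) • Matrix.vecMulVec (u S) (u S)) p q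
        = θ S * (e S p * e S q) := by
      intro S
      rw [Matrix.smul_apply, hatom, smul_eq_mul]
      field_simp
    rw [Finset.sum_congr rfl fun S _ => hterm S]
    rcases p with a | i <;> rcases q with b | j
    · simpa [he] using hsum.symm
    · have : ∀ S : Finset (Fin n), θ S * (e S (Sum.inl a) * e S (Sum.inr j)) = θ S * indVec S j := by
        intro S; simp [he]
      rw [Finset.sum_congr rfl fun S _ => this S, sum_theta_ind]
      simp only [Matrix.fromBlocks_apply₁₂, Matrix.of_apply]
      rw [Matrix.diag_apply, hrep, rep_diag]
    · have : ∀ S : Finset (Fin n), θ S * (e S (Sum.inr i) * e S (Sum.inl b)) = θ S * indVec S i := by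
        intro S; simp [he, mul_comm]
      rw [Finset.sum_congr rfl fun S _ => this S, sum_theta_ind]
      simp only [Matrix.fromBlocks_apply₂₁, Matrix.of_apply]
      rw [Matrix.diag_apply, hrep, rep_diag]
    · simp only [Matrix.fromBlocks_apply₂₂]
      rw [hrep, rep_apply]
      refine Finset.sum_congr rfl fun S _ => ?_
      simp [he]
  rw [key]
  refine Convex.sum_mem (convex_convexHull ℝ _) (fun S _ => div_nonneg (hθ0 S) hrR.le) ?_ ?_
  · rw [← Finset.sum_div, hsum, div_self (ne_of_gt hrR)]
  · intro S _
    refine subset_convexHull ℝ _ ?_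
    refine ⟨u S, ?_, ?_, rfl⟩
    · rintro (a | i)
      · simp [hu, he, Real.sqrt_nonneg]
      · simp only [hu, he, Sum.elim_inr, indVec]
        split <;> simp [Real.sqrt_nonneg]
    · intro i
      simp only [hu, he, Sum.elim_inr, Sum.elim_inl, indVec, mul_one]
      split
      · simp
      · simp [Real.sqrt_nonneg]
lemma convex_Cset (n r : ℕ) : Convex ℝ (Cset n r) := by
  rintro X ⟨hXs, hXd, hXb⟩ Y ⟨hYs, hYd, hYb⟩ a b ha hb hab
  refine ⟨?_, ?_, ?_⟩
  · unfold Matrix.IsSymm at *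
    rw [Matrix.transpose_add, Matrix.transpose_smul, Matrix.transpose_smul, hXs, hYs]
  · intro i
    have : (a • X + b • Y).diag i = a * X.diag i + b * Y.diag i := by
      simp [Matrix.diag_apply]
    rw [this]
    calc a * X.diag i + b * Y.diag i ≤ a * 1 + b * 1 := by
          gcongr; exacts [hXd i, hYd i]
      _ = 1 := by rw [mul_one, mul_one, hab]
  · have key : Matrix.fromBlocks (Matrix.of fun (_ : Fin 1) (_ : Fin 1) => (r : ℝ))
        (Matrix.of fun (_ : Fin 1) j => (a • X + b • Y).diag j)
        (Matrix.of fun i (_ : Fin 1) => (a • X + b • Y).diag i) (a • X + b • Y)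
        = a • (Matrix.fromBlocks (Matrix.of fun (_ : Fin 1) (_ : Fin 1) => (r : ℝ))
            (Matrix.of fun (_ : Fin 1) j => X.diag j)
            (Matrix.of fun i (_ : Fin 1) => X.diag i) X)
          + b • (Matrix.fromBlocks (Matrix.of fun (_ : Fin 1) (_ : Fin 1) => (r : ℝ))
            (Matrix.of fun (_ : Fin 1) j => Y.diag j)
            (Matrix.of fun i (_ : Fin 1) => Y.diag i) Y) := by
      ext p q
      rcases p with c | i <;> rcases q with d | j <;>
        simp [Matrix.diag_apply, ← add_mul, hab, mul_add]
    rw [key]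
    exact (convex_convexHull ℝ _) hXb hYb ha hb hab

lemma Rset_one_subset_Pset : Rset n 1 ⊆ Pset n 1 := by
  rintro X ⟨hsym, θ, hθ0, hrep, hsum, hcol⟩
  rw [hrep, Pset]
  push_cast at hsum
  refine Convex.sum_mem (convex_convexHull ℝ _) (fun S _ => hθ0 S) hsum ?_
  intro S _
  refine subset_convexHull ℝ _ ⟨atom_isSymm S, ?_, atom_posSemidef _, ?_⟩
  · intro i j
    simp only [Matrix.vecMulVec_apply, indVec]
    split <;> split <;> simp
  · have h := Matrix.rank_vecMulVec (indVec S) (indVec S)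
    have heq : (Matrix.vecMulVec (indVec S) (indVec S)).rank
        = Cardinal.toNat ((Matrix.toLin' (Matrix.vecMulVec (indVec S) (indVec S))).rank) := by
      rw [Matrix.rank, ← Matrix.toLin'_apply', Module.finrank, ← LinearMap.rank]
    rw [heq]
    calc Cardinal.toNat ((Matrix.toLin' (Matrix.vecMulVec (indVec S) (indVec S))).rank)
        ≤ Cardinal.toNat 1 := Cardinal.toNat_le_toNat h (by simp)
      _ = 1 := by simp
lemma quad3 {M : Matrix (Fin n) (Fin n) ℝ} (hM : M.PosSemidef) (i j k : Fin n)
    (a b c : ℝ) :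
    0 ≤ a*a*M i i + a*b*M i j + a*c*M i k + b*a*M j i + b*b*M j j + b*c*M j k
        + c*a*M k i + c*b*M k j + c*c*M k k := by
  have h := hM.dotProduct_mulVec_nonneg (a • (Pi.single i 1 : Fin n → ℝ) + b • (Pi.single j 1 : Fin n → ℝ) + c • (Pi.single k 1 : Fin n → ℝ))
  simp only [star_trivial, Matrix.mulVec_add, Matrix.mulVec_smul, Matrix.mulVec_single,
    dotProduct_add, add_dotProduct, smul_dotProduct, dotProduct_smul, single_dotProduct,
    smul_eq_mul, mul_one] at h
  convert h using 1
  · rfl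
  simp [Pi.add_apply, Pi.smul_apply, mul_comm, Matrix.col_apply]
  ring
lemma Dset_subset_Rset {r : ℕ} (hr : 0 < r) : Dset n r ⊆ Rset n r := by
  rintro X ⟨hsym, h01, hpsd, hrank⟩
  classical
  have hS : ∀ i j, X j i = X i j := fun i j => hsym.apply i j
  have hle1 : ∀ i j, X i j ≤ 1 := by
    intro i j; rcases h01 i j with h | h <;> rw [h] <;> norm_num
  have hF1 : ∀ i j, X i i = 0 → X i j = 0 := by
    intro i j hii
    by_contra hne
    have hij : X i j = 1 := (h01 i j).resolve_left hne
    have h := quad3 hpsd i j j (-1) 1 0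
    rw [hii, hij, hS i j] at h
    have := hle1 j j
    nlinarith [h]
  have hd1 : ∀ i j, X i j = 1 → X i i = 1 := by
    intro i j hij
    rcases h01 i i with h | h
    · exact absurd (hF1 i j h) (by rw [hij]; norm_num)
    · exact h
  have htrans : ∀ i j k, X k i = 1 → X k j = 1 → X i j = 1 := by
    intro i j k hki hkj
    by_contra hne
    have hij : X i j = 0 := (h01 i j).resolve_right hne
    have hii : X i i = 1 := hd1 i k (by rw [hS]; exact hki)
    have hjj : X j j = 1 := hd1 j k (by rw [hS]; exact hkj)
    have hkk : X k k = 1 := hd1 k i hki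
    have hji : X j i = 0 := by rw [hS i j]; exact hij
    have hik : X i k = 1 := (hS k i).trans hki
    have hjk : X j k = 1 := (hS k j).trans hkj
    have h := quad3 hpsd i j k 1 1 (-1)
    rw [hii, hjj, hkk, hij, hji, hik, hjk, hki, hkj] at h
    nlinarith [h]
  set row : Fin n → Finset (Fin n) :=
    fun i => Finset.univ.filter (fun j => X i j = 1) with hrow
  have hmem_row : ∀ i j : Fin n, j ∈ row i ↔ X i j = 1 := by
    intro i j; simp [hrow]
  have hrow_eq : ∀ i j, X i j = 1 → row i = row j := by
    intro i j hij
    ext k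
    rw [hmem_row, hmem_row]
    constructor
    · intro hik; exact htrans j k i hij hik
    · intro hjk; exact htrans i k j (by rw [hS]; exact hij) hjk
  set T : Finset (Finset (Fin n)) :=
    (Finset.univ.filter (fun i => X i i = 1)).image row with hT
  have hTmem : ∀ S ∈ T, ∃ k, X k k = 1 ∧ S = row k := by
    intro S hSmem
    rw [hT, Finset.mem_image] at hSmem
    obtain ⟨k, hk, hk2⟩ := hSmem
    exact ⟨k, (Finset.mem_filter.1 hk).2, hk2.symm⟩
  have hrow_mem_T : ∀ i, X i i = 1 → row i ∈ T := by
    intro i hi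
    rw [hT, Finset.mem_image]
    exact ⟨i, Finset.mem_filter.2 ⟨Finset.mem_univ i, hi⟩, rfl⟩
  have hunique : ∀ S ∈ T, ∀ i, i ∈ S → S = row i := by
    intro S hSmem i hi
    obtain ⟨k, hkk, rfl⟩ := hTmem S hSmem
    exact hrow_eq k i ((hmem_row k i).1 hi)
  have hempty : ∅ ∉ T := by
    intro h
    obtain ⟨k, hkk, hk2⟩ := hTmem ∅ h
    have : k ∈ row k := (hmem_row k k).2 hkk
    rw [← hk2] at this
    exact absurd this (Finset.notMem_empty k)
  -- pointwise representation
  have hXsum : ∀ i j, X i j = ∑ S ∈ T, indVec S i * indVec S j := by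
    intro i j
    have hterm : ∀ S, indVec S i * indVec S j
        = if i ∈ S ∧ j ∈ S then (1:ℝ) else 0 := by
      intro S
      by_cases hi : i ∈ S <;> by_cases hj : j ∈ S <;> simp [indVec, hi, hj]
    rw [Finset.sum_congr rfl fun S _ => hterm S, Finset.sum_boole]
    rcases h01 i j with h | h
    · rw [h]
      have hfe : T.filter (fun S => i ∈ S ∧ j ∈ S) = ∅ := by
        rw [Finset.filter_eq_empty_iff]
        rintro S hSmem ⟨hi, hj⟩
        obtain ⟨k, hkk, rfl⟩ := hTmem S hSmem
        have h1 : X k i = 1 := (hmem_row k i).1 hi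
        have h2 : X k j = 1 := (hmem_row k j).1 hj
        have := htrans i j k h1 h2
        rw [h] at this; norm_num at this
      rw [hfe]; simp
    · rw [h]
      have hii : X i i = 1 := hd1 i j h
      have hfe : T.filter (fun S => i ∈ S ∧ j ∈ S) = {row i} := by
        apply Finset.eq_singleton_iff_unique_mem.2
        constructor
        · exact Finset.mem_filter.2 ⟨hrow_mem_T i hii, (hmem_row i i).2 hii, (hmem_row i j).2 h⟩
        · rintro S hSf
          obtain ⟨hST, hi, _⟩ := Finset.mem_filter.1 hSf
          exact hunique S hST i hi
      rw [hfe]; simp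
  -- rank bound
  have hmemW : ∀ S ∈ T, indVec S ∈ LinearMap.range X.mulVecLin := by
    intro S hSmem
    obtain ⟨k, hkk, rfl⟩ := hTmem S hSmem
    refine ⟨Pi.single k 1, ?_⟩
    ext a
    rw [Matrix.mulVecLin_apply, Matrix.mulVec_single]
    show X a k * 1 = indVec (row k) a
    rw [mul_one, hS k a]
    rcases h01 k a with h | h
    · rw [h]
      have : a ∉ row k := by rw [hmem_row, h]; norm_num
      simp [indVec, this]
    · rw [h]
      have : a ∈ row k := (hmem_row k a).2 h
      simp [indVec, this]
  have hli : LinearIndependent ℝ (fun S : {S // S ∈ T} => indVec S.1) := by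
    rw [Fintype.linearIndependent_iff]
    intro g hg S
    obtain ⟨k, hkk, hSk⟩ := hTmem S.1 S.2
    have hkS : k ∈ S.1 := by rw [hSk]; exact (hmem_row k k).2 hkk
    have h0 := congrFun hg k
    rw [Finset.sum_apply] at h0
    have hterm : ∀ S' : {S // S ∈ T}, S' ≠ S → (g S' • indVec S'.1) k = 0 := by
      intro S' hne
      have hkn : k ∉ S'.1 := by
        intro hk
        apply hne
        apply Subtype.ext
        rw [hunique S'.1 S'.2 k hk, hunique S.1 S.2 k hkS]
      simp [indVec, hkn]
    rw [Fintype.sum_eq_single S hterm] at h0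
    simpa [indVec, hkS] using h0
  have hcardN : T.card ≤ X.rank := by
    have hli' : LinearIndependent ℝ (fun S : {S // S ∈ T} =>
        (⟨indVec S.1, hmemW S.1 S.2⟩ : LinearMap.range X.mulVecLin)) := by
      apply LinearIndependent.of_comp (LinearMap.range X.mulVecLin).subtype
      exact hli
    have hcc := hli'.fintype_card_le_finrank
    rw [Fintype.card_coe] at hcc
    rw [Matrix.rank]
    exact hcc
  have hcard : (T.card : ℝ) ≤ (r : ℝ) := by exact_mod_cast hcardN.trans hrank
  set θ : Finset (Fin n) → ℝ := fun S =>
    (if S ∈ T then (1:ℝ) else 0) + (if S = ∅ then (r:ℝ) - T.card else 0) with hθ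
  have hθ0 : ∀ S, 0 ≤ θ S := by
    intro S
    rw [hθ]
    have h2 : (0:ℝ) ≤ (r:ℝ) - T.card := by linarith
    dsimp only
    split <;> split <;> simp <;> linarith
  have hrep : X = ∑ S : Finset (Fin n), θ S • Matrix.vecMulVec (indVec S) (indVec S) := by
    ext i j
    rw [rep_apply, hXsum i j]
    have hterm : ∀ S : Finset (Fin n), θ S * (indVec S i * indVec S j)
        = if S ∈ T then indVec S i * indVec S j else 0 := by
      intro S
      rw [hθ]
      dsimp only
      by_cases hST : S ∈ T
      · have hne : S ≠ ∅ := by rintro rfl; exact hempty hST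
        simp [hST, hne]
      · by_cases hSe : S = ∅
        · subst hSe; simp [hST, indVec]
        · simp [hST, hSe]
    rw [Finset.sum_congr rfl fun S _ => hterm S, Finset.sum_ite_mem, Finset.univ_inter]
  have hsum : ∑ S : Finset (Fin n), θ S = (r : ℝ) := by
    rw [hθ]
    dsimp only
    rw [Finset.sum_add_distrib, Finset.sum_ite_mem, Finset.univ_inter, Finset.sum_const,
      Finset.sum_ite_eq' Finset.univ (∅ : Finset (Fin n))]
    simp
  refine ⟨hsym, θ, hθ0, hrep, hsum, ?_⟩
  intro i
  have hXii : ∑ S ∈ Finset.univ.filter (fun S : Finset (Fin n) => i ∈ S), θ S = X i i := by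
    rw [← rep_diag θ i, ← hrep]
  rw [hXii]
  exact hle1 i i
lemma Cset_subset_Rset (n r : ℕ) : Cset n r ⊆ Rset n r := by
  rintro X ⟨hsym, hdiag, hblock⟩
  classical
  rw [SCPset, _root_.convexHull_eq] at hblock
  obtain ⟨ι, t, w, z, hw0, hw1, hz, hcm⟩ := hblock
  choose! y hy0 hy1 hyz using hz
  set Y : Matrix (Fin 1 ⊕ Fin n) (Fin 1 ⊕ Fin n) ℝ :=
    Matrix.fromBlocks (Matrix.of fun (_ : Fin 1) (_ : Fin 1) => (r : ℝ))
      (Matrix.of fun (_ : Fin 1) j => X.diag j)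
      (Matrix.of fun i (_ : Fin 1) => X.diag i) X with hYdef
  have hY : Y = ∑ k ∈ t, w k • z k := by
    rw [← hcm, Finset.centerMass_eq_of_sum_1 _ _ hw1]
  have hEnt : ∀ p q, Y p q = ∑ k ∈ t, w k * (y k p * y k q) := by
    intro p q
    rw [hY, Matrix.sum_apply]
    refine Finset.sum_congr rfl fun k hk => ?_
    rw [Matrix.smul_apply, hyz k hk, Matrix.vecMulVec_apply, smul_eq_mul]
  have h_r : ∑ k ∈ t, w k * (y k (Sum.inl 0) * y k (Sum.inl 0)) = (r : ℝ) := by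
    have := hEnt (Sum.inl 0) (Sum.inl 0)
    simpa [hYdef] using this.symm
  have h_top : ∀ i : Fin n, ∑ k ∈ t, w k * (y k (Sum.inl 0) * y k (Sum.inr i)) = X i i := by
    intro i
    have := hEnt (Sum.inl 0) (Sum.inr i)
    simpa [hYdef, Matrix.diag_apply] using this.symm
  have h_dia : ∀ i : Fin n, ∑ k ∈ t, w k * (y k (Sum.inr i) * y k (Sum.inr i)) = X i i := by
    intro i
    have := hEnt (Sum.inr i) (Sum.inr i)
    simpa [hYdef] using this.symm
  have h_comp : ∀ i : Fin n, ∀ k ∈ t,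
      w k * (y k (Sum.inr i) * (y k (Sum.inl 0) - y k (Sum.inr i))) = 0 := by
    intro i
    have hzero : ∑ k ∈ t, w k * (y k (Sum.inr i) * (y k (Sum.inl 0) - y k (Sum.inr i))) = 0 := by
      have : ∀ k ∈ t, w k * (y k (Sum.inr i) * (y k (Sum.inl 0) - y k (Sum.inr i)))
          = w k * (y k (Sum.inl 0) * y k (Sum.inr i))
            - w k * (y k (Sum.inr i) * y k (Sum.inr i)) := by
        intro k _; ring
      rw [Finset.sum_congr rfl this, Finset.sum_sub_distrib, h_top i, h_dia i, sub_self]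
    refine (Finset.sum_eq_zero_iff_of_nonneg ?_).1 hzero
    intro k hk
    exact mul_nonneg (hw0 k hk) (mul_nonneg (hy0 k hk _)
      (sub_nonneg.2 (hy1 k hk i)))
  set supp : ι → Finset (Fin n) :=
    fun k => Finset.univ.filter (fun i => y k (Sum.inr i) ≠ 0) with hsupp
  set θ : Finset (Fin n) → ℝ :=
    fun S => ∑ k ∈ t.filter (fun k => supp k = S),
      w k * (y k (Sum.inl 0) * y k (Sum.inl 0)) with hθ
  have hθ0 : ∀ S, 0 ≤ θ S := by
    intro S
    refine Finset.sum_nonneg fun k hk => ?_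
    have hk' : k ∈ t := (Finset.mem_filter.1 hk).1
    exact mul_nonneg (hw0 k hk') (mul_nonneg (hy0 k hk' _) (hy0 k hk' _))
  have hind : ∀ k (i : Fin n), indVec (supp k) i = if y k (Sum.inr i) ≠ 0 then 1 else 0 := by
    intro k i
    by_cases h : y k (Sum.inr i) = 0 <;> simp [indVec, hsupp, h]
  have pointkey : ∀ k ∈ t, ∀ i j : Fin n,
      w k * (y k (Sum.inl 0) * y k (Sum.inl 0)) * (indVec (supp k) i * indVec (supp k) j)
        = w k * (y k (Sum.inr i) * y k (Sum.inr j)) := by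
    intro k hk i j
    by_cases hw : w k = 0
    · simp [hw]
    have hbin : ∀ i : Fin n, y k (Sum.inr i) = 0 ∨ y k (Sum.inr i) = y k (Sum.inl 0) := by
      intro i'
      have h0 := h_comp i' k hk
      rcases mul_eq_zero.1 h0 with h | h
      · exact absurd h hw
      rcases mul_eq_zero.1 h with h | h
      · exact Or.inl h
      · exact Or.inr (by linarith)
    rcases hbin i with hi | hi
    · simp [hi, hind]
    rcases hbin j with hj | hj
    · simp [hj, hind]
    by_cases ha : y k (Sum.inl 0) = 0
    · simp [hi, hj, ha]
    · have hine : y k (Sum.inr i) ≠ 0 := by rw [hi]; exact ha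
      have hjne : y k (Sum.inr j) ≠ 0 := by rw [hj]; exact ha
      rw [hind k i, hind k j, if_pos hine, if_pos hjne, hi, hj]
      ring
  have hfiber : ∀ f : ι → ℝ,
      ∑ S : Finset (Fin n), ∑ k ∈ t.filter (fun k => supp k = S), f k = ∑ k ∈ t, f k :=
    fun f => Finset.sum_fiberwise_of_maps_to (fun k _ => Finset.mem_univ (supp k)) f
  have hrep : X = ∑ S : Finset (Fin n), θ S • Matrix.vecMulVec (indVec S) (indVec S) := by
    ext i j
    rw [rep_apply]
    have step1 : ∀ S : Finset (Fin n), θ S * (indVec S i * indVec S j)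
        = ∑ k ∈ t.filter (fun k => supp k = S),
            w k * (y k (Sum.inl 0) * y k (Sum.inl 0)) * (indVec (supp k) i * indVec (supp k) j) := by
      intro S
      rw [hθ, Finset.sum_mul]
      refine Finset.sum_congr rfl fun k hk => ?_
      rw [(Finset.mem_filter.1 hk).2]
    rw [Finset.sum_congr rfl fun S _ => step1 S, hfiber,
      Finset.sum_congr rfl (fun k hk => pointkey k hk i j)]
    have := hEnt (Sum.inr i) (Sum.inr j)
    simpa [hYdef] using this
  refine ⟨hsym, θ, hθ0, hrep, ?_, ?_⟩
  · rw [hθ]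
    rw [hfiber (fun k => w k * (y k (Sum.inl 0) * y k (Sum.inl 0)))]
    exact h_r
  · intro i
    have h1 : ∑ S ∈ Finset.univ.filter (fun S : Finset (Fin n) => i ∈ S), θ S = X i i := by
      rw [← rep_diag θ i, ← hrep]
    rw [h1]
    exact hdiag i
end Aux

/-- For positive integers `r ≤ n` we have `𝒫ⁿ_r ⊆ 𝒞ⁿ_r = ℛⁿ_r`, and for `r = 1`
all three sets are equal. -/
theorem stmt6 (n r : ℕ) (hr : 0 < r) (hrn : r ≤ n) :
    Pset n r ⊆ Cset n r ∧ Cset n r = Rset n r ∧ (r = 1 → Pset n r = Cset n r) := by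
  have hRC := Rset_subset_Cset (n := n) hr
  have hCR := Cset_subset_Rset n r
  have hCReq : Cset n r = Rset n r := Set.Subset.antisymm hCR hRC
  have hPC : Pset n r ⊆ Cset n r := by
    rw [Pset]
    exact convexHull_min (fun X hX => hRC (Dset_subset_Rset hr hX)) (convex_Cset n r)
  refine ⟨hPC, hCReq, ?_⟩
  rintro rfl
  apply Set.Subset.antisymm hPC
  intro X hX
  exact Rset_one_subset_Pset (hCR hX)
end

section
/- Let a₁,…,a_p ∈ ℝⁿ, b₁,…,b_p ∈ ℝ, and let S := Σ_{i=1}^{p} v_i v_iᵀ where v_i ∈ ℝ^{n+1} is the vector whose first entry is −b_i and whose remaining n entries are a_i. Let X be a symmetric n×n matrix with all entries in {0,1}, set x := diag(X), and suppose the (n+1)×(n+1) block matrix Y with top-left entry 1, top-right block xᵀ, bottom-left block x and bottom-right block X is PSD. Then a_iᵀx = b_i for all i ∈ {1,…,p} if and only if ⟨S, Y⟩ = 0. -/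
open Matrix

/-- The `(n+1) × (n+1)` block matrix with top-left `1×1` block equal to `1`,
top-right block `xᵀ`, bottom-left block `x`, and bottom-right block `X`. -/
def liftedBlock {n : ℕ} (x : Fin n → ℝ) (X : Matrix (Fin n) (Fin n) ℝ) :
    Matrix (Fin 1 ⊕ Fin n) (Fin 1 ⊕ Fin n) ℝ :=
  Matrix.fromBlocks (Matrix.of fun (_ : Fin 1) (_ : Fin 1) => (1 : ℝ))
    (Matrix.of fun (_ : Fin 1) j => x j)
    (Matrix.of fun i (_ : Fin 1) => x i) X

/-- The vector `(−b_i, a_i) ∈ ℝ^{n+1}`. -/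
def affVec {n : ℕ} (a : Fin n → ℝ) (b : ℝ) : Fin 1 ⊕ Fin n → ℝ :=
  Sum.elim (fun _ => -b) a

/-- A real PSD matrix with zero diagonal is zero. -/
lemma psd_diag_zero_eq_zero {m : Type*} [Fintype m] [DecidableEq m]
    {M : Matrix m m ℝ} (hM : M.PosSemidef) (hd : ∀ i, M i i = 0) : M = 0 := by
  ext i j
  have hsymm : M j i = M i j := by
    have h := congrFun (congrFun hM.1 i) j
    simpa [Matrix.conjTranspose_apply] using h
  set c := M i j with hc
  set u : m → ℝ := (Pi.single j (1:ℝ) : m → ℝ) - c • (Pi.single i (1:ℝ) : m → ℝ) with hu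
  have h := hM.dotProduct_mulVec_nonneg u
  have hval : star u ⬝ᵥ M *ᵥ u = -(2 * c ^ 2) := by
    simp only [star_trivial, hu, sub_dotProduct, smul_dotProduct, single_dotProduct,
      Matrix.mulVec_sub, Matrix.mulVec_smul, Matrix.mulVec_single_one, Matrix.col_apply, Pi.sub_apply,
      Pi.smul_apply, smul_eq_mul, one_mul, mul_one, hd, hsymm, ← hc]
    ring
  rw [hval] at h
  have : c = 0 := by nlinarith
  simpa using this

/-- Let `S := Σ_i (−b_i, a_i)(−b_i, a_i)ᵀ`, let `X` be a symmetric `{0,1}` matrix with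
`x := diag X`, and suppose `Y = [[1, xᵀ], [x, X]]` is PSD.  Then `a_iᵀ x = b_i` for all `i`
iff `⟨S, Y⟩ = 0`. -/
theorem stmt12 (n p : ℕ) (a : Fin p → Fin n → ℝ) (b : Fin p → ℝ)
    (X : Matrix (Fin n) (Fin n) ℝ) (hsym : X.IsSymm)
    (h01 : ∀ i j, X i j = 0 ∨ X i j = 1)
    (hY : (liftedBlock X.diag X).PosSemidef) :
    (∀ i : Fin p, a i ⬝ᵥ X.diag = b i) ↔
      ((∑ i : Fin p, Matrix.vecMulVec (affVec (a i) (b i)) (affVec (a i) (b i)))ᵀ *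
          liftedBlock X.diag X).trace = 0 := by
  set x := X.diag with hx
  -- rewrite liftedBlock as a `fromBlocks 1 B Bᴴ X`
  set B : Matrix (Fin 1) (Fin n) ℝ := Matrix.of fun (_ : Fin 1) j => x j with hB
  have hblock : liftedBlock x X = Matrix.fromBlocks 1 B Bᴴ X := by
    unfold liftedBlock
    ext (i | i) (j | j) <;>
      simp [Matrix.fromBlocks, hB, Matrix.conjTranspose_apply, Matrix.one_apply, Fin.eq_zero]
  -- Schur complement: X - Bᴴ B is PSD
  haveI : Invertible (1 : Matrix (Fin 1) (Fin 1) ℝ) := invertibleOne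
  have hschur : (X - Bᴴ * (1 : Matrix (Fin 1) (Fin 1) ℝ)⁻¹ * B).PosSemidef := by
    rw [← Matrix.PosDef.fromBlocks₁₁ B X Matrix.PosDef.one, ← hblock]
    exact hY
  rw [inv_one, Matrix.mul_one] at hschur
  have hBB : Bᴴ * B = Matrix.vecMulVec x x := by
    ext i j
    simp [hB, Matrix.mul_apply, Matrix.vecMulVec_apply, Matrix.conjTranspose_apply, mul_comm]
  rw [hBB] at hschur
  -- diagonal of X - xxᵀ is zero since entries are 0/1
  have hdiag : ∀ i, (X - Matrix.vecMulVec x x) i i = 0 := by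
    intro i
    have : X i i = 0 ∨ X i i = 1 := h01 i i
    simp only [Matrix.sub_apply, Matrix.vecMulVec_apply, hx, Matrix.diag_apply]
    rcases this with h | h <;> rw [h] <;> ring
  have hXeq : X = Matrix.vecMulVec x x := by
    have := psd_diag_zero_eq_zero hschur hdiag
    rwa [sub_eq_zero] at this
  -- the lifted block is w wᵀ for w = (1, x)
  set w : Fin 1 ⊕ Fin n → ℝ := Sum.elim (fun _ => 1) x with hw
  have hYeq : liftedBlock x X = Matrix.vecMulVec w w := by
    ext (i | i) (j | j) <;>
      simp [liftedBlock, Matrix.fromBlocks, Matrix.vecMulVec_apply, hw]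
    exact congrFun (congrFun hXeq i) j
  -- trace formula for rank-one matrices
  have key : ∀ u : Fin 1 ⊕ Fin n → ℝ,
      ((Matrix.vecMulVec u u)ᵀ * Matrix.vecMulVec w w).trace = (u ⬝ᵥ w) ^ 2 := by
    intro u
    simp only [Matrix.trace, Matrix.diag_apply, Matrix.mul_apply, Matrix.transpose_apply,
      Matrix.vecMulVec_apply]
    rw [pow_two, dotProduct, Finset.sum_mul_sum]
    rw [Finset.sum_comm]
    exact Finset.sum_congr rfl fun k _ => Finset.sum_congr rfl fun j _ => by ring
  have hdot : ∀ i : Fin p, affVec (a i) (b i) ⬝ᵥ w = a i ⬝ᵥ x - b i := by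
    intro i
    simp only [dotProduct, Fintype.sum_sum_type, affVec, hw, Sum.elim_inl, Sum.elim_inr]
    simp [dotProduct]
    ring
  have htr : ((∑ i : Fin p, Matrix.vecMulVec (affVec (a i) (b i)) (affVec (a i) (b i)))ᵀ *
      liftedBlock x X).trace = ∑ i : Fin p, (a i ⬝ᵥ x - b i) ^ 2 := by
    rw [hYeq, Matrix.transpose_sum, Finset.sum_mul, Matrix.trace_sum]
    exact Finset.sum_congr rfl fun i _ => by rw [key, hdot]
  rw [htr]
  constructor
  · intro h
    refine Finset.sum_eq_zero fun i _ => ?_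
    rw [h i, sub_self]
    ring
  · intro h i
    have hnn : ∀ i ∈ Finset.univ, (0:ℝ) ≤ (a i ⬝ᵥ x - b i) ^ 2 := fun i _ => sq_nonneg _
    have := (Finset.sum_eq_zero_iff_of_nonneg hnn).mp h i (Finset.mem_univ i)
    have h2 : a i ⬝ᵥ x - b i = 0 := by
      nlinarith [this]
    linarith
end
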